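/- Let S_1,…,S_m be C-nondisturbing operators on H⊗K with probe operators B_i^k (so S_k(ψ_i ⊗ φ) = ψ_i ⊗ B_i^k φ), and let ρ be an operator on H and η an operator on K. Then (a) tr_K[∑_{k} S_k(ρ⊗η)S_k*] = ∑_{i,j,k} tr(B_i^k η (B_j^k)*) P_{ψ_i} ρ P_{ψ_j}, and (b) tr_H[∑_{k} S_k(ρ⊗η)S_k*] = ∑_{i} ⟨ψ_i, ρ ψ_i⟩ ∑_{k} B_i^k η (B_i^k)*. -/

import Mathlib

open scoped ComplexOrder Kronecker
noncomputable section
/-- Tensor product of vectors in the concrete model `EuclideanSpace ℂ (Fin n × Fin m)` of `H ⊗ K`. -/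
def tens {n m : ℕ} (x : EuclideanSpace ℂ (Fin n)) (y : EuclideanSpace ℂ (Fin m)) :
    EuclideanSpace ℂ (Fin n × Fin m) :=
  (WithLp.equiv 2 _).symm fun p => x p.1 * y p.2

/-- The rank-one operator `|x⟩⟨y|`. -/
def ketBra {ι : Type*} [Fintype ι] (x y : EuclideanSpace ℂ ι) :
    EuclideanSpace ℂ ι →ₗ[ℂ] EuclideanSpace ℂ ι where
  toFun z := (inner ℂ y z : ℂ) • x
  map_add' a b := by simp [inner_add_right, add_smul]
  map_smul' c a := by simp [inner_smul_right, smul_smul]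

/-- The tensor product of operators. -/
def opTens {n m : ℕ}
    (S : EuclideanSpace ℂ (Fin n) →ₗ[ℂ] EuclideanSpace ℂ (Fin n))
    (T : EuclideanSpace ℂ (Fin m) →ₗ[ℂ] EuclideanSpace ℂ (Fin m)) :
    EuclideanSpace ℂ (Fin n × Fin m) →ₗ[ℂ] EuclideanSpace ℂ (Fin n × Fin m) :=
  Matrix.toEuclideanLin
    ((Matrix.toEuclideanLin.symm S) ⊗ₖ (Matrix.toEuclideanLin.symm T))

/-- `A` is C-nondisturbing for the context `C = {P_{ψ i}}`. -/
def Nondisturbing {n m : ℕ} (ψ : OrthonormalBasis (Fin n) ℂ (EuclideanSpace ℂ (Fin n)))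
    (A : EuclideanSpace ℂ (Fin n × Fin m) →ₗ[ℂ] EuclideanSpace ℂ (Fin n × Fin m)) : Prop :=
  ∀ i, A ∘ₗ opTens (ketBra (ψ i) (ψ i)) LinearMap.id
      = opTens (ketBra (ψ i) (ψ i)) LinearMap.id ∘ₗ A

/-- `B i` are probe operators for `A`: `A (ψ i ⊗ φ) = ψ i ⊗ B i φ`. -/
def ProbeOps {n m : ℕ} (ψ : OrthonormalBasis (Fin n) ℂ (EuclideanSpace ℂ (Fin n)))
    (A : EuclideanSpace ℂ (Fin n × Fin m) →ₗ[ℂ] EuclideanSpace ℂ (Fin n × Fin m))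
    (B : Fin n → EuclideanSpace ℂ (Fin m) →ₗ[ℂ] EuclideanSpace ℂ (Fin m)) : Prop :=
  ∀ i φv, A (tens (ψ i) φv) = tens (ψ i) (B i φv)

/-- Loewner order: `S ≤ T` iff `⟪φ, (T - S) φ⟫` is real and nonnegative for every `φ`. -/
def opLE {ι : Type*} [Fintype ι]
    (S T : EuclideanSpace ℂ ι →ₗ[ℂ] EuclideanSpace ℂ ι) : Prop :=
  ∀ φv, 0 ≤ (inner ℂ φv ((T - S) φv) : ℂ)

/-- The partial trace over `H`. -/
def trH {n m : ℕ} (ψ : OrthonormalBasis (Fin n) ℂ (EuclideanSpace ℂ (Fin n)))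
    (φ : OrthonormalBasis (Fin m) ℂ (EuclideanSpace ℂ (Fin m)))
    (T : EuclideanSpace ℂ (Fin n × Fin m) →ₗ[ℂ] EuclideanSpace ℂ (Fin n × Fin m)) :
    EuclideanSpace ℂ (Fin m) →ₗ[ℂ] EuclideanSpace ℂ (Fin m) :=
  ∑ j, ∑ k, (∑ i, (inner ℂ (tens (ψ i) (φ j)) (T (tens (ψ i) (φ k))) : ℂ)) • ketBra (φ j) (φ k)

/-- The partial trace over `K`. -/
def trK {n m : ℕ} (ψ : OrthonormalBasis (Fin n) ℂ (EuclideanSpace ℂ (Fin n)))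
    (φ : OrthonormalBasis (Fin m) ℂ (EuclideanSpace ℂ (Fin m)))
    (T : EuclideanSpace ℂ (Fin n × Fin m) →ₗ[ℂ] EuclideanSpace ℂ (Fin n × Fin m)) :
    EuclideanSpace ℂ (Fin n) →ₗ[ℂ] EuclideanSpace ℂ (Fin n) :=
  ∑ i, ∑ k, (∑ j, (inner ℂ (tens (ψ i) (φ j)) (T (tens (ψ k) (φ j))) : ℂ)) • ketBra (ψ i) (ψ k)

variable {n m : ℕ}

lemma tens_apply (x : EuclideanSpace ℂ (Fin n)) (y : EuclideanSpace ℂ (Fin m)) (p : Fin n × Fin m) :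
    tens x y p = x p.1 * y p.2 := rfl

lemma inner_tens (x u : EuclideanSpace ℂ (Fin n)) (y v : EuclideanSpace ℂ (Fin m)) :
    (inner ℂ (tens x y) (tens u v) : ℂ) = inner ℂ x u * inner ℂ y v := by
  simp only [PiLp.inner_apply, RCLike.inner_apply, tens_apply, Fintype.sum_prod_type]
  rw [Finset.sum_mul_sum]
  refine Finset.sum_congr rfl fun a _ => Finset.sum_congr rfl fun b _ => ?_
  simp only [map_mul]; ring

def tensL : EuclideanSpace ℂ (Fin n) →ₗ[ℂ] EuclideanSpace ℂ (Fin m) →ₗ[ℂ]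
    EuclideanSpace ℂ (Fin n × Fin m) :=
  LinearMap.mk₂ ℂ tens
    (fun x x' y => by ext p; simp [tens_apply, add_mul])
    (fun c x y => by ext p; simp [tens_apply, mul_assoc])
    (fun x y y' => by ext p; simp [tens_apply, mul_add])
    (fun c x y => by ext p; simp [tens_apply]; ring)

def tensONB (ψ : OrthonormalBasis (Fin n) ℂ (EuclideanSpace ℂ (Fin n)))
    (φ : OrthonormalBasis (Fin m) ℂ (EuclideanSpace ℂ (Fin m))) :
    OrthonormalBasis (Fin n × Fin m) ℂ (EuclideanSpace ℂ (Fin n × Fin m)) :=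
  OrthonormalBasis.mk (v := fun p => tens (ψ p.1) (φ p.2))
    (by
      rw [orthonormal_iff_ite]
      intro p q
      rw [inner_tens, orthonormal_iff_ite.mp ψ.orthonormal,
        orthonormal_iff_ite.mp φ.orthonormal]
      by_cases h1 : p.1 = q.1 <;> by_cases h2 : p.2 = q.2 <;>
        simp [h1, h2, Prod.ext_iff])
    (by
      have hon : Orthonormal ℂ (fun p : Fin n × Fin m => tens (ψ p.1) (φ p.2)) := by
        rw [orthonormal_iff_ite]
        intro p q
        rw [inner_tens, orthonormal_iff_ite.mp ψ.orthonormal,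
          orthonormal_iff_ite.mp φ.orthonormal]
        by_cases h1 : p.1 = q.1 <;> by_cases h2 : p.2 = q.2 <;>
          simp [h1, h2, Prod.ext_iff]
      exact (hon.linearIndependent.span_eq_top_of_card_eq_finrank'
        (by simp [finrank_euclideanSpace])).ge)

lemma ext_tens (ψ : OrthonormalBasis (Fin n) ℂ (EuclideanSpace ℂ (Fin n)))
    (φ : OrthonormalBasis (Fin m) ℂ (EuclideanSpace ℂ (Fin m)))
    {a b : EuclideanSpace ℂ (Fin n × Fin m)}
    (h : ∀ i l, (inner ℂ (tens (ψ i) (φ l)) a : ℂ) = inner ℂ (tens (ψ i) (φ l)) b) : a = b := by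
  apply (tensONB ψ φ).repr.injective
  ext p
  rw [(tensONB ψ φ).repr_apply_apply, (tensONB ψ φ).repr_apply_apply]
  have hc : (tensONB ψ φ) p = tens (ψ p.1) (φ p.2) := by
    simp [tensONB, OrthonormalBasis.coe_mk]
  rw [hc]
  exact h p.1 p.2

lemma euclid_apply_eq (S : EuclideanSpace ℂ (Fin n) →ₗ[ℂ] EuclideanSpace ℂ (Fin n))
    (z : EuclideanSpace ℂ (Fin n)) (a : Fin n) :
    S z a = ∑ c, (Matrix.toEuclideanLin.symm S) a c * z c := by
  conv_lhs => rw [← Matrix.toEuclideanLin.apply_symm_apply S]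
  rfl

lemma opTens_tens (S : EuclideanSpace ℂ (Fin n) →ₗ[ℂ] EuclideanSpace ℂ (Fin n))
    (T : EuclideanSpace ℂ (Fin m) →ₗ[ℂ] EuclideanSpace ℂ (Fin m))
    (x : EuclideanSpace ℂ (Fin n)) (y : EuclideanSpace ℂ (Fin m)) :
    opTens S T (tens x y) = tens (S x) (T y) := by
  have hO : ∀ (z : EuclideanSpace ℂ (Fin n × Fin m)) p, opTens S T z p =
      ∑ q, ((Matrix.toEuclideanLin.symm S) ⊗ₖ (Matrix.toEuclideanLin.symm T)) p q * z q := by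
    intro z p; rfl
  ext p
  rw [hO, tens_apply, euclid_apply_eq, euclid_apply_eq, Finset.sum_mul_sum,
    Fintype.sum_prod_type]
  refine Finset.sum_congr rfl fun a _ => Finset.sum_congr rfl fun b _ => ?_
  rw [tens_apply, Matrix.kroneckerMap_apply]; ring

lemma ketBra_apply {ι : Type*} [Fintype ι] (x y z : EuclideanSpace ℂ ι) :
    ketBra x y z = (inner ℂ y z : ℂ) • x := rfl

lemma ketBra_comp (x y : EuclideanSpace ℂ (Fin n))
    (ρ : EuclideanSpace ℂ (Fin n) →ₗ[ℂ] EuclideanSpace ℂ (Fin n)) :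
    ketBra x x ∘ₗ ρ ∘ₗ ketBra y y = (inner ℂ x (ρ y) : ℂ) • ketBra x y := by
  refine LinearMap.ext fun z => ?_
  simp only [LinearMap.comp_apply, LinearMap.smul_apply, ketBra_apply, map_smul,
    inner_smul_right, smul_smul]
  ring_nf

lemma trace_eq_sum_inner' (φ : OrthonormalBasis (Fin m) ℂ (EuclideanSpace ℂ (Fin m)))
    (X : EuclideanSpace ℂ (Fin m) →ₗ[ℂ] EuclideanSpace ℂ (Fin m)) :
    LinearMap.trace ℂ (EuclideanSpace ℂ (Fin m)) X = ∑ j, (inner ℂ (φ j) (X (φ j)) : ℂ) := by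
  rw [LinearMap.trace_eq_matrix_trace ℂ φ.toBasis]
  simp [Matrix.trace, Matrix.diag, LinearMap.toMatrix_apply,
    OrthonormalBasis.coe_toBasis, OrthonormalBasis.coe_toBasis_repr_apply,
    OrthonormalBasis.repr_apply_apply]

lemma op_expand (φ : OrthonormalBasis (Fin m) ℂ (EuclideanSpace ℂ (Fin m)))
    (X : EuclideanSpace ℂ (Fin m) →ₗ[ℂ] EuclideanSpace ℂ (Fin m)) :
    X = ∑ b, ∑ d, (inner ℂ (φ b) (X (φ d)) : ℂ) • ketBra (φ b) (φ d) := by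
  refine LinearMap.ext fun z => ?_
  simp only [LinearMap.sum_apply, LinearMap.smul_apply, ketBra_apply]
  calc X z = ∑ d, (inner ℂ (φ d) z : ℂ) • X (φ d) := by
        conv_lhs => rw [← φ.sum_repr' z, map_sum]
        simp
    _ = ∑ d, (inner ℂ (φ d) z : ℂ) • ∑ b, (inner ℂ (φ b) (X (φ d)) : ℂ) • φ b := by
        simp_rw [φ.sum_repr']
    _ = ∑ b, ∑ d, (inner ℂ (φ b) (X (φ d)) : ℂ) • ((inner ℂ (φ d) z : ℂ) • φ b) := by
        rw [Finset.sum_comm]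
        simp_rw [Finset.smul_sum, smul_smul, mul_comm]

lemma adjoint_probe {ψ : OrthonormalBasis (Fin n) ℂ (EuclideanSpace ℂ (Fin n))}
    (φ : OrthonormalBasis (Fin m) ℂ (EuclideanSpace ℂ (Fin m)))
    {A : EuclideanSpace ℂ (Fin n × Fin m) →ₗ[ℂ] EuclideanSpace ℂ (Fin n × Fin m)}
    {B : Fin n → EuclideanSpace ℂ (Fin m) →ₗ[ℂ] EuclideanSpace ℂ (Fin m)}
    (hp : ProbeOps ψ A B) (j : Fin n) (χ : EuclideanSpace ℂ (Fin m)) :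
    LinearMap.adjoint A (tens (ψ j) χ) = tens (ψ j) (LinearMap.adjoint (B j) χ) := by
  apply ext_tens ψ φ
  intro i l
  rw [LinearMap.adjoint_inner_right, hp i, inner_tens, inner_tens,
    LinearMap.adjoint_inner_right]
  rcases eq_or_ne i j with rfl | hne
  · rfl
  · rw [ψ.orthonormal.2 hne, zero_mul, zero_mul]

lemma apply_tens {ψ : OrthonormalBasis (Fin n) ℂ (EuclideanSpace ℂ (Fin n))}
    {A : EuclideanSpace ℂ (Fin n × Fin m) →ₗ[ℂ] EuclideanSpace ℂ (Fin n × Fin m)}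
    {B : Fin n → EuclideanSpace ℂ (Fin m) →ₗ[ℂ] EuclideanSpace ℂ (Fin m)}
    (hp : ProbeOps ψ A B) (x : EuclideanSpace ℂ (Fin n)) (χ : EuclideanSpace ℂ (Fin m)) :
    A (tens x χ) = ∑ i, (inner ℂ (ψ i) x : ℂ) • tens (ψ i) (B i χ) := by
  have h1 : tens x χ = ∑ i, (inner ℂ (ψ i) x : ℂ) • tens (ψ i) χ := by
    conv_lhs => rw [← ψ.sum_repr' x]
    show tensL.flip χ _ = _
    rw [map_sum]
    refine Finset.sum_congr rfl fun i _ => ?_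
    rw [map_smul]
    rfl
  rw [h1, map_sum]
  refine Finset.sum_congr rfl fun i _ => ?_
  rw [map_smul, hp i]

lemma elem {ψ : OrthonormalBasis (Fin n) ℂ (EuclideanSpace ℂ (Fin n))}
    (φ : OrthonormalBasis (Fin m) ℂ (EuclideanSpace ℂ (Fin m)))
    {A : EuclideanSpace ℂ (Fin n × Fin m) →ₗ[ℂ] EuclideanSpace ℂ (Fin n × Fin m)}
    {B : Fin n → EuclideanSpace ℂ (Fin m) →ₗ[ℂ] EuclideanSpace ℂ (Fin m)}
    (hp : ProbeOps ψ A B)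
    (ρ : EuclideanSpace ℂ (Fin n) →ₗ[ℂ] EuclideanSpace ℂ (Fin n))
    (η : EuclideanSpace ℂ (Fin m) →ₗ[ℂ] EuclideanSpace ℂ (Fin m))
    (a c : Fin n) (b d : Fin m) :
    (inner ℂ (tens (ψ a) (φ b)) ((A ∘ₗ opTens ρ η ∘ₗ LinearMap.adjoint A) (tens (ψ c) (φ d))) : ℂ)
    = inner ℂ (ψ a) (ρ (ψ c)) * inner ℂ (φ b) ((B a ∘ₗ η ∘ₗ LinearMap.adjoint (B c)) (φ d)) := by
  simp only [LinearMap.comp_apply]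
  rw [adjoint_probe φ hp, opTens_tens, apply_tens hp, inner_sum]
  simp only [inner_smul_right, inner_tens]
  rw [Finset.sum_eq_single a]
  · rw [orthonormal_iff_ite.mp ψ.orthonormal]
    simp [mul_comm]
  · intro e _ hea
    rw [ψ.orthonormal.2 (Ne.symm hea), zero_mul, mul_zero]
  · intro h; exact absurd (Finset.mem_univ a) h
theorem sum4_comm {α β γ δ M : Type*} [AddCommMonoid M] [Fintype α] [Fintype β] [Fintype γ]
    [Fintype δ] (F : α → β → γ → δ → M) :
    ∑ j : α, ∑ d : β, ∑ i : γ, ∑ k : δ, F j d i k = ∑ i, ∑ k, ∑ j, ∑ d, F j d i k :=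
  calc ∑ j : α, ∑ d : β, ∑ i : γ, ∑ k : δ, F j d i k
      = ∑ j : α, ∑ i : γ, ∑ d : β, ∑ k : δ, F j d i k :=
        Finset.sum_congr rfl fun j _ => Finset.sum_comm
    _ = ∑ i : γ, ∑ j : α, ∑ d : β, ∑ k : δ, F j d i k := Finset.sum_comm
    _ = ∑ i : γ, ∑ j : α, ∑ k : δ, ∑ d : β, F j d i k :=
        Finset.sum_congr rfl fun i _ => Finset.sum_congr rfl fun j _ => Finset.sum_comm
    _ = ∑ i : γ, ∑ k : δ, ∑ j : α, ∑ d : β, F j d i k :=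
        Finset.sum_congr rfl fun i _ => Finset.sum_comm

theorem stmt16 {n m p : ℕ} (ψ : OrthonormalBasis (Fin n) ℂ (EuclideanSpace ℂ (Fin n))) (φb : OrthonormalBasis (Fin m) ℂ (EuclideanSpace ℂ (Fin m)))
    (S : Fin p → (EuclideanSpace ℂ (Fin n × Fin m) →ₗ[ℂ] EuclideanSpace ℂ (Fin n × Fin m))) (B : Fin n → Fin p → (EuclideanSpace ℂ (Fin m) →ₗ[ℂ] EuclideanSpace ℂ (Fin m)))
    (hnd : ∀ k, Nondisturbing ψ (S k))
    (hprobe : ∀ k, ProbeOps ψ (S k) (fun i => B i k))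
    (ρ : EuclideanSpace ℂ (Fin n) →ₗ[ℂ] EuclideanSpace ℂ (Fin n)) (η : EuclideanSpace ℂ (Fin m) →ₗ[ℂ] EuclideanSpace ℂ (Fin m)) :
    trK ψ φb (∑ k, S k ∘ₗ opTens ρ η ∘ₗ LinearMap.adjoint (S k)) =
      (∑ i, ∑ j, ∑ k, (LinearMap.trace ℂ (EuclideanSpace ℂ (Fin m)) (B i k ∘ₗ η ∘ₗ LinearMap.adjoint (B j k))) •
        (ketBra (ψ i) (ψ i) ∘ₗ ρ ∘ₗ ketBra (ψ j) (ψ j))) ∧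
    trH ψ φb (∑ k, S k ∘ₗ opTens ρ η ∘ₗ LinearMap.adjoint (S k)) =
      ∑ i, (inner ℂ (ψ i) (ρ (ψ i)) : ℂ) • ∑ k, B i k ∘ₗ η ∘ₗ LinearMap.adjoint (B i k) := by
  have key : ∀ (k : Fin p) (a c : Fin n) (b d : Fin m),
      (inner ℂ (tens (ψ a) (φb b)) ((S k ∘ₗ opTens ρ η ∘ₗ LinearMap.adjoint (S k)) (tens (ψ c) (φb d))) : ℂ)
      = inner ℂ (ψ a) (ρ (ψ c)) * inner ℂ (φb b) ((B a k ∘ₗ η ∘ₗ LinearMap.adjoint (B c k)) (φb d)) :=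
    fun k a c b d => elem φb (hprobe k) ρ η a c b d
  constructor
  · rw [trK]
    refine Finset.sum_congr rfl fun a _ => Finset.sum_congr rfl fun c _ => ?_
    simp_rw [LinearMap.sum_apply, inner_sum, key, ketBra_comp, smul_smul,
      trace_eq_sum_inner' φb]
    simp only [LinearMap.comp_apply]
    rw [← Finset.sum_smul, Finset.sum_comm]
    congr 1
    refine Finset.sum_congr rfl fun k _ => ?_
    rw [Finset.sum_mul]
    exact Finset.sum_congr rfl fun j _ => mul_comm _ _
  · rw [trH]
    have hY : ∀ (i : Fin n) (k : Fin p), B i k ∘ₗ η ∘ₗ LinearMap.adjoint (B i k)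
        = ∑ j, ∑ d, (inner ℂ (φb j) ((B i k ∘ₗ η ∘ₗ LinearMap.adjoint (B i k)) (φb d)) : ℂ) •
            ketBra (φb j) (φb d) := fun i k => op_expand φb _
    have hRHS : (∑ i, (inner ℂ (ψ i) (ρ (ψ i)) : ℂ) • ∑ k, B i k ∘ₗ η ∘ₗ LinearMap.adjoint (B i k))
        = ∑ i, ∑ k, ∑ j, ∑ d,
            ((inner ℂ (ψ i) (ρ (ψ i)) : ℂ) *
              inner ℂ (φb j) ((B i k ∘ₗ η ∘ₗ LinearMap.adjoint (B i k)) (φb d))) •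
            ketBra (φb j) (φb d) := by
      refine Finset.sum_congr rfl fun i _ => ?_
      rw [Finset.smul_sum]
      refine Finset.sum_congr rfl fun k _ => ?_
      conv_lhs => rw [hY i k]
      rw [Finset.smul_sum]
      refine Finset.sum_congr rfl fun j _ => ?_
      rw [Finset.smul_sum]
      exact Finset.sum_congr rfl fun d _ => smul_smul _ _ _
    rw [hRHS, ← sum4_comm (fun j d i k =>
      ((inner ℂ (ψ i) (ρ (ψ i)) : ℂ) *
        inner ℂ (φb j) ((B i k ∘ₗ η ∘ₗ LinearMap.adjoint (B i k)) (φb d))) • ketBra (φb j) (φb d))]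
    refine Finset.sum_congr rfl fun j _ => Finset.sum_congr rfl fun d _ => ?_
    simp_rw [LinearMap.sum_apply, inner_sum, key]
    rw [Finset.sum_smul]
    exact Finset.sum_congr rfl fun i _ => Finset.sum_smul
end
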